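/- arXiv:1309.2982 — 2 statements merged into one kernel-verified Lean document; each statement's English description precedes it below -/
import Mathlib

section
/- In the setting of adverse optimal stopping on a finite filtered space, the game has a value: $\inf_{\tau \in \mathcal{T}} \sup_{P \in \mathcal{R}} E_P[f_\tau] = \sup_{P \in \mathcal{R}} \inf_{\tau \in \mathcal{T}} E_P[f_\tau]$, where $\mathcal{R}$ is a pasting-stable family of probability measures built from one-step kernel families and $f$ is adapted. -/
/-! Adverse optimal stopping for nonlinear expectations on the product path space
`Ω = Ω₁^ℕ` (coordinates `0, …, T-1` are observed at times `1, …, T`), with `Ω₁` finite.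
`R t ω` is the set of one-step transition laws available at time `t` in state `ω`;
the pasting-stable family `𝔯_t(ω)` is encoded by the recursively defined nonlinear
conditional expectation `NE`. -/

/-- The nonlinear conditional expectation `𝓔_t[ξ](ω) = sup_{P ∈ 𝔯_t(ω)} E_P[ξ(ω^t, ·)]`
obtained by backward recursion over the one-step kernel sets `R`. -/
noncomputable def NE {Ω₁ : Type*} [Fintype Ω₁] (T : ℕ)
    (R : ℕ → (ℕ → Ω₁) → Set (Ω₁ → ℝ)) (t : ℕ) (ξ : (ℕ → Ω₁) → ℝ) : (ℕ → Ω₁) → ℝ :=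
  if h : T ≤ t then ξ
  else fun ω =>
    sSup ((fun P : Ω₁ → ℝ =>
      ∑ x : Ω₁, P x * NE T R (t + 1) ξ (Function.update ω t x)) '' R t ω)
termination_by T - t
decreasing_by omega

/-- Stopping times of the raw filtration with values in `[t, T]`. -/
def IsStopAt {Ω₁ : Type*} (T t : ℕ) (τ : (ℕ → Ω₁) → ℕ) : Prop :=
  (∀ ω, t ≤ τ ω ∧ τ ω ≤ T) ∧
  ∀ s : ℕ, ∀ ω ω' : ℕ → Ω₁, (∀ j, j < s → ω j = ω' j) → τ ω = s → τ ω' = s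

/-- An adapted payoff process: `f t` depends only on the first `t` coordinates. -/
def AdaptedProc {Ω₁ : Type*} (T : ℕ) (f : ℕ → (ℕ → Ω₁) → ℝ) : Prop :=
  ∀ t ≤ T, ∀ ω ω' : ℕ → Ω₁, (∀ j, j < t → ω j = ω' j) → f t ω = f t ω'

/-- The one-step kernel sets are nonempty convex-free families of probability vectors,
depending only on the past. -/
def GoodKernels {Ω₁ : Type*} [Fintype Ω₁] (T : ℕ)
    (R : ℕ → (ℕ → Ω₁) → Set (Ω₁ → ℝ)) : Prop :=
  ∀ t, t < T → ∀ ω : ℕ → Ω₁,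
    (R t ω).Nonempty ∧
    (∀ P ∈ R t ω, (∀ x, 0 ≤ P x) ∧ ∑ x : Ω₁, P x = 1) ∧
    (∀ ω' : ℕ → Ω₁, (∀ j, j < t → ω j = ω' j) → R t ω = R t ω')

/-- The upper value process `X t = inf_{τ ∈ 𝒯_t} 𝓔_t[f_τ]`. -/
noncomputable def upValue {Ω₁ : Type*} [Fintype Ω₁] (T : ℕ)
    (R : ℕ → (ℕ → Ω₁) → Set (Ω₁ → ℝ)) (f : ℕ → (ℕ → Ω₁) → ℝ) (t : ℕ) :
    (ℕ → Ω₁) → ℝ :=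
  fun ω => ⨅ τ : {τ : (ℕ → Ω₁) → ℕ // IsStopAt T t τ},
    NE T R t (fun ω' => f (τ.1 ω') ω') ω
/-- The linear expectation along a selection `σ` of one-step kernels
(i.e. under the pasted measure `P = σ 0 ⊗ σ 1 ⊗ ⋯ ⊗ σ (T-1)`). -/
noncomputable def PE {Ω₁ : Type*} [Fintype Ω₁] (T : ℕ)
    (σ : ℕ → (ℕ → Ω₁) → (Ω₁ → ℝ)) (t : ℕ) (ξ : (ℕ → Ω₁) → ℝ) : (ℕ → Ω₁) → ℝ :=
  if h : T ≤ t then ξ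
  else fun ω => ∑ x : Ω₁, σ t ω x * PE T σ (t + 1) ξ (Function.update ω t x)
termination_by T - t
decreasing_by omega

/-!
The upper value is at most the Snell envelope `V_t = min (f_t, sup_{P ∈ R_t} E_P[V_{t+1}])`:
stopping the first time `V` touches `f` costs exactly `V`. Conversely, choosing at every node a
kernel that is `δ`-optimal in the one-step problem defining `V` gives one admissible selection,
i.e. one pasted measure, under which every stopping time has expected payoff at least `V_0 - T δ`.
The inequality `sup inf ≤ inf sup` holds for any game.
-/

open Function Set

section OneStep

variable {Ω₁ : Type*} [Fintype Ω₁]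

def stepExp (t : ℕ) (P : Ω₁ → ℝ) (g : (ℕ → Ω₁) → ℝ) (ω : ℕ → Ω₁) : ℝ :=
  ∑ x, P x * g (update ω t x)

noncomputable def stepSup (R : ℕ → (ℕ → Ω₁) → Set (Ω₁ → ℝ)) (t : ℕ) (g : (ℕ → Ω₁) → ℝ)
    (ω : ℕ → Ω₁) : ℝ :=
  sSup ((stepExp t · g ω) '' R t ω)

variable {R R' : ℕ → (ℕ → Ω₁) → Set (Ω₁ → ℝ)} {t : ℕ} {P : Ω₁ → ℝ} {g g' : (ℕ → Ω₁) → ℝ}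
  {ω ω' : ℕ → Ω₁} {B : ℝ}

lemma stepExp_mono (hP : P ∈ stdSimplex ℝ Ω₁) (hg : g ≤ g') :
    stepExp t P g ω ≤ stepExp t P g' ω :=
  Finset.sum_le_sum fun x _ => mul_le_mul_of_nonneg_left (hg _) (hP.1 x)

lemma stepExp_sub_const (hP : P ∈ stdSimplex ℝ Ω₁) (c : ℝ) :
    stepExp t P (fun ω' => g ω' - c) ω = stepExp t P g ω - c := by
  simp only [stepExp, mul_sub, Finset.sum_sub_distrib, ← Finset.sum_mul, hP.2, one_mul]

lemma stepExp_const (hP : P ∈ stdSimplex ℝ Ω₁) (c : ℝ) : stepExp t P (fun _ => c) ω = c := by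
  simp only [stepExp, ← Finset.sum_mul, hP.2, one_mul]

lemma abs_stepExp_le (hP : P ∈ stdSimplex ℝ Ω₁) (hg : ∀ ω, |g ω| ≤ B) :
    |stepExp t P g ω| ≤ B := by
  refine abs_le.2 ⟨?_, ?_⟩
  · calc -B = stepExp t P (fun _ => -B) ω := (stepExp_const hP _).symm
      _ ≤ stepExp t P g ω := stepExp_mono hP fun ω => (abs_le.1 (hg ω)).1
  · calc stepExp t P g ω ≤ stepExp t P (fun _ => B) ω :=
          stepExp_mono hP fun ω => (abs_le.1 (hg ω)).2
      _ = B := stepExp_const hP _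

lemma stepSup_singleton (σ : ℕ → (ℕ → Ω₁) → (Ω₁ → ℝ)) :
    stepSup (fun t ω => {σ t ω}) t g ω = stepExp t (σ t ω) g ω := by
  simp only [stepSup, image_singleton, csSup_singleton]

lemma stepSup_congr (hR : R t ω = R t ω') (hg : ∀ x, g (update ω t x) = g' (update ω' t x)) :
    stepSup R t g ω = stepSup R t g' ω' := by
  simp only [stepSup, stepExp, hR, hg]

lemma stepSup_le {c : ℝ} (hne : (R t ω).Nonempty) (h : ∀ P ∈ R t ω, stepExp t P g ω ≤ c) :
    stepSup R t g ω ≤ c :=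
  csSup_le (hne.image _) (forall_mem_image.2 h)

lemma stepExp_le_stepSup (hprob : R t ω ⊆ stdSimplex ℝ Ω₁) (hg : ∀ ω, |g ω| ≤ B)
    (hP : P ∈ R t ω) : stepExp t P g ω ≤ stepSup R t g ω :=
  le_csSup ⟨B, forall_mem_image.2 fun _ hQ => (abs_le.1 (abs_stepExp_le (hprob hQ) hg)).2⟩
    (mem_image_of_mem _ hP)

lemma abs_stepSup_le (hne : (R t ω).Nonempty) (hprob : R t ω ⊆ stdSimplex ℝ Ω₁)
    (hg : ∀ ω, |g ω| ≤ B) : |stepSup R t g ω| ≤ B := by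
  obtain ⟨P, hP⟩ := hne
  refine abs_le.2 ⟨?_, stepSup_le ⟨P, hP⟩ fun Q hQ => (abs_le.1 (abs_stepExp_le (hprob hQ) hg)).2⟩
  exact (abs_le.1 (abs_stepExp_le (hprob hP) hg)).1.trans (stepExp_le_stepSup hprob hg hP)

lemma stepSup_const (hne : (R t ω).Nonempty) (hprob : R t ω ⊆ stdSimplex ℝ Ω₁) (c : ℝ) :
    stepSup R t (fun _ => c) ω = c := by
  obtain ⟨P, hP⟩ := hne
  refine le_antisymm (stepSup_le ⟨P, hP⟩ fun Q hQ => (stepExp_const (hprob hQ) c).le) ?_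
  calc c = stepExp t P (fun _ => c) ω := (stepExp_const (hprob hP) c).symm
    _ ≤ stepSup R t (fun _ => c) ω := stepExp_le_stepSup hprob (B := |c|) (fun _ => le_rfl) hP

lemma stepSup_mono (hne : (R' t ω).Nonempty) (hprob : R t ω ⊆ stdSimplex ℝ Ω₁)
    (hsub : R' t ω ⊆ R t ω) (hg : g ≤ g') (hg' : ∀ ω, |g' ω| ≤ B) :
    stepSup R' t g ω ≤ stepSup R t g' ω :=
  stepSup_le hne fun _ hP =>
    (stepExp_mono (hprob (hsub hP)) hg).trans (stepExp_le_stepSup hprob hg' (hsub hP))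

lemma exists_sub_lt_stepExp (hne : (R t ω).Nonempty) {δ : ℝ} (hδ : 0 < δ) :
    ∃ P ∈ R t ω, stepSup R t g ω - δ < stepExp t P g ω := by
  obtain ⟨_, ⟨P, hP, rfl⟩, h⟩ := exists_lt_of_lt_csSup (hne.image _) (sub_lt_self _ hδ)
  exact ⟨P, hP, h⟩

end OneStep

lemma eqOn_update_Iio {Ω₁ : Type*} (ω : ℕ → Ω₁) (t : ℕ) (x : Ω₁) :
    EqOn (update ω t x) ω (Iio t) :=
  fun _ hj => update_of_ne (ne_of_lt hj) _ _

lemma Set.EqOn.update_Iio_succ {Ω₁ : Type*} {ω ω' : ℕ → Ω₁} {t : ℕ} (h : EqOn ω ω' (Iio t))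
    (x : Ω₁) : EqOn (update ω t x) (update ω' t x) (Iio (t + 1)) := by
  intro j hj
  rcases (Nat.lt_succ_iff.1 hj).lt_or_eq with hj | rfl
  · rw [update_of_ne hj.ne, update_of_ne hj.ne]
    exact h hj
  · rw [update_self, update_self]

lemma Set.EqOn.of_update_Iio_succ {Ω₁ : Type*} {ω ω' : ℕ → Ω₁} {t : ℕ} {x : Ω₁}
    (h : EqOn ω' (update ω t x) (Iio (t + 1))) : EqOn ω' ω (Iio t) :=
  (h.mono (Iio_subset_Iio t.le_succ)).trans (eqOn_update_Iio ω t x)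

section Kernels

variable {Ω₁ : Type*} {T : ℕ} {R : ℕ → (ℕ → Ω₁) → Set (Ω₁ → ℝ)}
  {σ : ℕ → (ℕ → Ω₁) → (Ω₁ → ℝ)}

def IsSelection (T : ℕ) (R : ℕ → (ℕ → Ω₁) → Set (Ω₁ → ℝ)) (σ : ℕ → (ℕ → Ω₁) → (Ω₁ → ℝ)) :
    Prop :=
  ∀ t < T, ∀ ω, σ t ω ∈ R t ω

lemma exists_isSelection {p : ℕ → (ℕ → Ω₁) → (Ω₁ → ℝ) → Prop}
    (h : ∀ t < T, ∀ ω, ∃ P ∈ R t ω, p t ω P) :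
    ∃ σ, IsSelection T R σ ∧ ∀ t < T, ∀ ω, p t ω (σ t ω) := by
  classical
  choose P hPR hP using h
  refine ⟨fun t ω => if ht : t < T then P t ht ω else 0, fun t ht ω => ?_, fun t ht ω => ?_⟩
  · simpa only [dif_pos ht] using hPR t ht ω
  · simpa only [dif_pos ht] using hP t ht ω

variable [Fintype Ω₁]

def ProbKernels (T : ℕ) (R : ℕ → (ℕ → Ω₁) → Set (Ω₁ → ℝ)) : Prop :=
  ∀ t < T, ∀ ω, (R t ω).Nonempty ∧ R t ω ⊆ stdSimplex ℝ Ω₁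

lemma GoodKernels.probKernels (hR : GoodKernels T R) : ProbKernels T R :=
  fun t ht ω => ⟨(hR t ht ω).1, (hR t ht ω).2.1⟩

lemma ProbKernels.singleton (hR : ProbKernels T R) (hσ : IsSelection T R σ) :
    ProbKernels T fun t ω => {σ t ω} :=
  fun t ht ω => ⟨singleton_nonempty _, singleton_subset_iff.2 ((hR t ht ω).2 (hσ t ht ω))⟩

end Kernels

section Expectations

variable {Ω₁ : Type*} [Fintype Ω₁] {T : ℕ} {R R' : ℕ → (ℕ → Ω₁) → Set (Ω₁ → ℝ)}
  {σ : ℕ → (ℕ → Ω₁) → (Ω₁ → ℝ)} {ξ ξ' : (ℕ → Ω₁) → ℝ} {B : ℝ}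

lemma NE_of_ge {t : ℕ} (h : T ≤ t) : NE T R t ξ = ξ := by
  rw [NE, dif_pos h]

lemma NE_of_lt {t : ℕ} (h : t < T) (ω : ℕ → Ω₁) :
    NE T R t ξ ω = stepSup R t (NE T R (t + 1) ξ) ω := by
  rw [NE, dif_neg h.not_ge]
  rfl

lemma PE_of_ge {t : ℕ} (h : T ≤ t) : PE T σ t ξ = ξ := by
  rw [PE, dif_pos h]

lemma PE_of_lt {t : ℕ} (h : t < T) (ω : ℕ → Ω₁) :
    PE T σ t ξ ω = stepExp t (σ t ω) (PE T σ (t + 1) ξ) ω := by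
  rw [PE, dif_neg h.not_ge]
  rfl

lemma NE_congr (t : ℕ) (ω : ℕ → Ω₁) (h : ∀ ω', EqOn ω' ω (Iio t) → ξ ω' = ξ' ω') :
    NE T R t ξ ω = NE T R t ξ' ω := by
  rcases le_or_gt T t with hT | hT
  · rw [NE_of_ge hT, NE_of_ge hT]
    exact h ω (eqOn_refl _ _)
  · rw [NE_of_lt hT, NE_of_lt hT]
    exact stepSup_congr rfl fun x =>
      NE_congr (t + 1) _ fun ω' h' => h ω' h'.of_update_Iio_succ
termination_by T - t

lemma NE_const (hR : ProbKernels T R) (c : ℝ) (t : ℕ) : NE T R t (fun _ => c) = fun _ => c := by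
  funext ω
  rcases le_or_gt T t with hT | hT
  · rw [NE_of_ge hT]
  · rw [NE_of_lt hT, NE_const hR c (t + 1)]
    exact stepSup_const (hR t hT ω).1 (hR t hT ω).2 c
termination_by T - t

lemma NE_eq_of_eqOn {t : ℕ} (hR : ProbKernels T R) {ω : ℕ → Ω₁}
    (h : ∀ ω', EqOn ω' ω (Iio t) → ξ ω' = ξ ω) : NE T R t ξ ω = ξ ω :=
  (NE_congr (ξ' := fun _ => ξ ω) t ω h).trans (congrFun (NE_const hR (ξ ω) t) ω)

lemma abs_NE_le (hR : ProbKernels T R) (hξ : ∀ ω, |ξ ω| ≤ B) (t : ℕ) (ω : ℕ → Ω₁) :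
    |NE T R t ξ ω| ≤ B := by
  rcases le_or_gt T t with hT | hT
  · rw [NE_of_ge hT]
    exact hξ ω
  · rw [NE_of_lt hT]
    exact abs_stepSup_le (hR t hT ω).1 (hR t hT ω).2 (abs_NE_le hR hξ (t + 1))
termination_by T - t

lemma NE_mono_of_subset (hR' : ProbKernels T R') (hR : ProbKernels T R)
    (hsub : ∀ t < T, ∀ ω, R' t ω ⊆ R t ω) (hξ : ∀ ω, |ξ ω| ≤ B) (t : ℕ) (ω : ℕ → Ω₁) :
    NE T R' t ξ ω ≤ NE T R t ξ ω := by
  rcases le_or_gt T t with hT | hT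
  · rw [NE_of_ge hT, NE_of_ge hT]
  · rw [NE_of_lt hT, NE_of_lt hT]
    exact stepSup_mono (hR' t hT ω).1 (hR t hT ω).2 (hsub t hT ω)
      (NE_mono_of_subset hR' hR hsub hξ (t + 1)) (abs_NE_le hR hξ (t + 1))
termination_by T - t

lemma PE_eq_NE (t : ℕ) : PE T σ t ξ = NE T (fun t ω => {σ t ω}) t ξ := by
  funext ω
  rcases le_or_gt T t with hT | hT
  · rw [PE_of_ge hT, NE_of_ge hT]
  · rw [PE_of_lt hT, NE_of_lt hT, stepSup_singleton, PE_eq_NE (t + 1)]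
termination_by T - t

lemma PE_congr (t : ℕ) (ω : ℕ → Ω₁) (h : ∀ ω', EqOn ω' ω (Iio t) → ξ ω' = ξ' ω') :
    PE T σ t ξ ω = PE T σ t ξ' ω := by
  simpa only [PE_eq_NE] using NE_congr t ω h

lemma PE_eq_of_eqOn (hR : ProbKernels T R) (hσ : IsSelection T R σ) {ω : ℕ → Ω₁}
    (h : ∀ ω', EqOn ω' ω (Iio t) → ξ ω' = ξ ω) : PE T σ t ξ ω = ξ ω := by
  simpa only [PE_eq_NE] using NE_eq_of_eqOn (hR.singleton hσ) h

lemma abs_PE_le (hR : ProbKernels T R) (hσ : IsSelection T R σ) (hξ : ∀ ω, |ξ ω| ≤ B)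
    (t : ℕ) (ω : ℕ → Ω₁) : |PE T σ t ξ ω| ≤ B := by
  simpa only [PE_eq_NE] using abs_NE_le (hR.singleton hσ) hξ t ω

lemma PE_le_NE (hR : ProbKernels T R) (hσ : IsSelection T R σ) (hξ : ∀ ω, |ξ ω| ≤ B)
    (t : ℕ) (ω : ℕ → Ω₁) : PE T σ t ξ ω ≤ NE T R t ξ ω := by
  simpa only [PE_eq_NE] using NE_mono_of_subset (hR.singleton hσ) hR
    (fun t ht ω => singleton_subset_iff.2 (hσ t ht ω)) hξ t ω

end Expectations

section StoppingTimes

variable {Ω₁ : Type*} {T t : ℕ} {τ : (ℕ → Ω₁) → ℕ}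

lemma isStopAt_const (ht : t ≤ T) : IsStopAt T t fun _ : ℕ → Ω₁ => T :=
  ⟨fun _ => ⟨ht, le_rfl⟩, fun _ _ _ _ h => h⟩

lemma IsStopAt.le (hτ : IsStopAt T t τ) (ω : ℕ → Ω₁) : t ≤ T :=
  (hτ.1 ω).1.trans (hτ.1 ω).2

lemma IsStopAt.eq_of_eqOn {ω ω' : ℕ → Ω₁} (hτ : IsStopAt T t τ) (hω : τ ω = t)
    (h : EqOn ω' ω (Iio t)) : τ ω' = t :=
  hτ.2 t ω ω' (fun _ hj => (h hj).symm) hω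

lemma IsStopAt.succ_le_of_eqOn {ω ω' : ℕ → Ω₁} (hτ : IsStopAt T t τ) (hω : t < τ ω)
    (h : EqOn ω' ω (Iio t)) : t + 1 ≤ τ ω' := by
  by_contra! hlt
  have hω' : τ ω' = t := le_antisymm (Nat.lt_succ_iff.1 hlt) (hτ.1 ω').1
  exact hω.ne' (hτ.2 t ω' ω h hω')

lemma IsStopAt.max_succ (hτ : IsStopAt T t τ) (hT : t < T) :
    IsStopAt T (t + 1) fun ω => max (τ ω) (t + 1) := by
  refine ⟨fun ω => ⟨le_max_right _ _, max_le (hτ.1 ω).2 hT⟩, fun s ω ω' h hs => ?_⟩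
  beta_reduce at hs ⊢
  rcases lt_or_ge (τ ω) (t + 1) with hlt | hge
  · have hτ' : τ ω' = τ ω := hτ.2 (τ ω) ω ω' (fun j hj => h j (by omega)) rfl
    rw [hτ', ← hs]
  · rw [max_eq_left hge] at hs
    rw [hτ.2 s ω ω' h hs, ← hs, max_eq_left hge]

end StoppingTimes

section Snell

variable {Ω₁ : Type*} [Fintype Ω₁] {T : ℕ} {R : ℕ → (ℕ → Ω₁) → Set (Ω₁ → ℝ)}
  {f : ℕ → (ℕ → Ω₁) → ℝ}

noncomputable def snell (T : ℕ) (R : ℕ → (ℕ → Ω₁) → Set (Ω₁ → ℝ)) (f : ℕ → (ℕ → Ω₁) → ℝ)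
    (t : ℕ) (ω : ℕ → Ω₁) : ℝ :=
  if T ≤ t then f t ω else min (f t ω) (stepSup R t (snell T R f (t + 1)) ω)
termination_by T - t

lemma snell_of_ge {t : ℕ} (h : T ≤ t) (ω : ℕ → Ω₁) : snell T R f t ω = f t ω := by
  rw [snell, if_pos h]

lemma snell_of_lt {t : ℕ} (h : t < T) (ω : ℕ → Ω₁) :
    snell T R f t ω = min (f t ω) (stepSup R t (snell T R f (t + 1)) ω) := by
  rw [snell, if_neg h.not_ge]

lemma snell_le {t : ℕ} (ω : ℕ → Ω₁) : snell T R f t ω ≤ f t ω := by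
  rcases le_or_gt T t with hT | hT
  · rw [snell_of_ge hT]
  · rw [snell_of_lt hT]
    exact min_le_left _ _

lemma snell_of_ne {t : ℕ} (hT : t < T) {ω : ℕ → Ω₁} (h : snell T R f t ω ≠ f t ω) :
    snell T R f t ω = stepSup R t (snell T R f (t + 1)) ω := by
  rw [snell_of_lt hT] at h ⊢
  exact (min_choice _ _).resolve_left h

lemma snell_congr {t : ℕ} (hR : GoodKernels T R) (hf : AdaptedProc T f) (ht : t ≤ T)
    {ω ω' : ℕ → Ω₁} (h : EqOn ω ω' (Iio t)) : snell T R f t ω = snell T R f t ω' := by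
  rcases ht.lt_or_eq with hT | rfl
  · rw [snell_of_lt hT, snell_of_lt hT, hf t ht ω ω' h]
    congr 1
    exact stepSup_congr ((hR t hT ω).2.2 ω' h) fun x =>
      snell_congr hR hf hT (h.update_Iio_succ x)
  · rw [snell_of_ge le_rfl, snell_of_ge le_rfl]
    exact hf t ht ω ω' h
termination_by T - t

lemma snell_eq_iff_of_eqOn {t : ℕ} (hR : GoodKernels T R) (hf : AdaptedProc T f) (ht : t ≤ T)
    {ω ω' : ℕ → Ω₁} (h : EqOn ω ω' (Iio t)) :
    snell T R f t ω = f t ω ↔ snell T R f t ω' = f t ω' := by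
  rw [snell_congr hR hf ht h, hf t ht ω ω' h]

noncomputable def optStop (T : ℕ) (R : ℕ → (ℕ → Ω₁) → Set (Ω₁ → ℝ)) (f : ℕ → (ℕ → Ω₁) → ℝ)
    (t : ℕ) (ω : ℕ → Ω₁) : ℕ :=
  if T ≤ t then t else if snell T R f t ω = f t ω then t else optStop T R f (t + 1) ω
termination_by T - t

lemma optStop_of_ge {t : ℕ} (h : T ≤ t) (ω : ℕ → Ω₁) : optStop T R f t ω = t := by
  rw [optStop, if_pos h]

lemma optStop_of_eq {t : ℕ} {ω : ℕ → Ω₁} (h : snell T R f t ω = f t ω) : optStop T R f t ω = t := by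
  rw [optStop]
  split_ifs <;> rfl

lemma optStop_of_ne {t : ℕ} (hT : t < T) {ω : ℕ → Ω₁} (h : snell T R f t ω ≠ f t ω) :
    optStop T R f t ω = optStop T R f (t + 1) ω := by
  rw [optStop, if_neg hT.not_ge, if_neg h]

lemma isStopAt_optStop {t : ℕ} (hR : GoodKernels T R) (hf : AdaptedProc T f) (ht : t ≤ T) :
    IsStopAt T t (optStop T R f t) := by
  rcases ht.lt_or_eq with hT | rfl
  · have ih := isStopAt_optStop hR hf hT
    refine ⟨fun ω => ?_, fun s ω ω' h hs => ?_⟩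
    · by_cases hω : snell T R f t ω = f t ω
      · rw [optStop_of_eq hω]
        exact ⟨le_rfl, ht⟩
      · rw [optStop_of_ne hT hω]
        exact ⟨(ih.1 ω).1.trans' t.le_succ, (ih.1 ω).2⟩
    · by_cases hω : snell T R f t ω = f t ω
      · rw [optStop_of_eq hω] at hs
        subst hs
        exact optStop_of_eq ((snell_eq_iff_of_eqOn hR hf ht h).1 hω)
      · rw [optStop_of_ne hT hω] at hs
        have hts : t < s := hs ▸ (ih.1 ω).1
        have h' : EqOn ω ω' (Iio t) := fun j hj => h j (hj.trans hts)
        rw [optStop_of_ne hT (mt (snell_eq_iff_of_eqOn hR hf ht h').2 hω), ih.2 s ω ω' h hs]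
  · exact ⟨fun ω => by simp only [optStop_of_ge le_rfl, le_rfl, and_self],
      fun s ω ω' _ hs => by rwa [optStop_of_ge le_rfl] at hs ⊢⟩
termination_by T - t

lemma NE_optStop {t : ℕ} (hR : GoodKernels T R) (hf : AdaptedProc T f) (ht : t ≤ T)
    (ω : ℕ → Ω₁) : NE T R t (fun ω' => f (optStop T R f t ω') ω') ω = snell T R f t ω := by
  rcases ht.lt_or_eq with hT | rfl
  · by_cases hω : snell T R f t ω = f t ω
    · calc NE T R t (fun ω' => f (optStop T R f t ω') ω') ω = NE T R t (f t) ω :=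
            NE_congr t ω fun ω' h => by
              rw [optStop_of_eq ((snell_eq_iff_of_eqOn hR hf ht h).2 hω)]
        _ = f t ω := NE_eq_of_eqOn hR.probKernels fun ω' h => hf t ht ω' ω h
        _ = snell T R f t ω := hω.symm
    · calc NE T R t (fun ω' => f (optStop T R f t ω') ω') ω
          = NE T R t (fun ω' => f (optStop T R f (t + 1) ω') ω') ω :=
            NE_congr t ω fun ω' h => by
              rw [optStop_of_ne hT (mt (snell_eq_iff_of_eqOn hR hf ht h).1 hω)]
        _ = stepSup R t (snell T R f (t + 1)) ω := by
            rw [NE_of_lt hT]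
            congr 1
            funext ω'
            exact NE_optStop hR hf hT ω'
        _ = snell T R f t ω := (snell_of_ne hT hω).symm
  · rw [NE_of_ge le_rfl, optStop_of_ge le_rfl, snell_of_ge le_rfl]
termination_by T - t

lemma snell_sub_le_PE (hR : ProbKernels T R) (hf : AdaptedProc T f)
    {σ : ℕ → (ℕ → Ω₁) → (Ω₁ → ℝ)} (hσ : IsSelection T R σ) {δ : ℝ} (hδ : 0 ≤ δ)
    (hopt : ∀ t < T, ∀ ω, stepSup R t (snell T R f (t + 1)) ω - δ ≤
      stepExp t (σ t ω) (snell T R f (t + 1)) ω)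
    {t : ℕ} {τ : (ℕ → Ω₁) → ℕ} (hτ : IsStopAt T t τ) (ω : ℕ → Ω₁) :
    snell T R f t ω - (T - t) * δ ≤ PE T σ t (fun ω' => f (τ ω') ω') ω := by
  rcases (hτ.1 ω).1.lt_or_eq with hlt | heq
  · have hT : t < T := hlt.trans_le (hτ.1 ω).2
    have hP : σ t ω ∈ stdSimplex ℝ Ω₁ := (hR t hT ω).2 (hσ t hT ω)
    calc snell T R f t ω - (T - t) * δ
        ≤ stepSup R t (snell T R f (t + 1)) ω - δ - (T - (t + 1 : ℕ)) * δ := by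
          rw [snell_of_lt hT]
          push_cast
          linarith [min_le_right (f t ω) (stepSup R t (snell T R f (t + 1)) ω)]
      _ ≤ stepExp t (σ t ω) (snell T R f (t + 1)) ω - (T - (t + 1 : ℕ)) * δ := by
          linarith [hopt t hT ω]
      _ = stepExp t (σ t ω) (fun ω' => snell T R f (t + 1) ω' - (T - (t + 1 : ℕ)) * δ) ω :=
          (stepExp_sub_const hP _).symm
      _ ≤ stepExp t (σ t ω) (PE T σ (t + 1) fun ω' => f (max (τ ω') (t + 1)) ω') ω :=
          stepExp_mono hP fun ω' => snell_sub_le_PE hR hf hσ hδ hopt (hτ.max_succ hT) ω'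
      _ = PE T σ t (fun ω' => f (max (τ ω') (t + 1)) ω') ω := (PE_of_lt hT ω).symm
      _ = PE T σ t (fun ω' => f (τ ω') ω') ω := PE_congr t ω fun ω' h => by
          rw [max_eq_left (hτ.succ_le_of_eqOn hlt h)]
  · have hTt : 0 ≤ (T - t : ℝ) * δ := mul_nonneg (sub_nonneg.2 (by exact_mod_cast hτ.le ω)) hδ
    calc snell T R f t ω - (T - t) * δ ≤ f t ω := (sub_le_self _ hTt).trans (snell_le ω)
      _ = PE T σ t (f t) ω := (PE_eq_of_eqOn hR hσ fun ω' h => hf t (hτ.le ω) ω' ω h).symm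
      _ = PE T σ t (fun ω' => f (τ ω') ω') ω := PE_congr t ω fun ω' h => by
          rw [hτ.eq_of_eqOn heq.symm h]
termination_by T - t

end Snell

section Values

variable {Ω₁ : Type*} [Fintype Ω₁] {T : ℕ} {R : ℕ → (ℕ → Ω₁) → Set (Ω₁ → ℝ)}
  {f : ℕ → (ℕ → Ω₁) → ℝ} {t : ℕ} {B : ℝ}

lemma AdaptedProc.exists_abs_le [Nonempty Ω₁] (hf : AdaptedProc T f) :
    ∃ B, ∀ s ≤ T, ∀ ω, |f s ω| ≤ B := by
  classical
  let extend : (Fin T → Ω₁) → ℕ → Ω₁ := fun p j =>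
    if h : j < T then p ⟨j, h⟩ else Classical.arbitrary Ω₁
  obtain ⟨B, hB⟩ :=
    (finite_range fun q : Fin (T + 1) × (Fin T → Ω₁) => |f q.1 (extend q.2)|).bddAbove
  refine ⟨B, fun s hs ω => ?_⟩
  have hω : f s ω = f s (extend fun i => ω i) :=
    hf s hs _ _ fun j hj => by simp only [extend, dif_pos (hj.trans_le hs)]
  exact hω ▸ hB ⟨(⟨s, Nat.lt_succ_of_le hs⟩, fun i => ω i), rfl⟩

noncomputable def lowValue (T : ℕ) (R : ℕ → (ℕ → Ω₁) → Set (Ω₁ → ℝ))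
    (f : ℕ → (ℕ → Ω₁) → ℝ) (t : ℕ) (ω : ℕ → Ω₁) : ℝ :=
  ⨆ σ : {σ // IsSelection T R σ}, ⨅ τ : {τ : (ℕ → Ω₁) → ℕ // IsStopAt T t τ},
    PE T σ.1 t (fun ω' => f (τ.1 ω') ω') ω

lemma bddBelow_NE_stopped (hR : ProbKernels T R) (hB : ∀ s ≤ T, ∀ ω, |f s ω| ≤ B) (t : ℕ)
    (ω : ℕ → Ω₁) :
    BddBelow (range fun τ : {τ : (ℕ → Ω₁) → ℕ // IsStopAt T t τ} =>
      NE T R t (fun ω' => f (τ.1 ω') ω') ω) :=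
  ⟨-B, forall_mem_range.2 fun τ =>
    (abs_le.1 (abs_NE_le hR (fun ω' => hB _ (τ.2.1 ω').2 ω') t ω)).1⟩

lemma bddBelow_PE_stopped (hR : ProbKernels T R) (hB : ∀ s ≤ T, ∀ ω, |f s ω| ≤ B)
    {σ : ℕ → (ℕ → Ω₁) → (Ω₁ → ℝ)} (hσ : IsSelection T R σ) (t : ℕ) (ω : ℕ → Ω₁) :
    BddBelow (range fun τ : {τ : (ℕ → Ω₁) → ℕ // IsStopAt T t τ} =>
      PE T σ t (fun ω' => f (τ.1 ω') ω') ω) := by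
  simpa only [PE_eq_NE] using bddBelow_NE_stopped (hR.singleton hσ) hB t ω

lemma upValue_le_snell (hR : GoodKernels T R) (hf : AdaptedProc T f)
    (hB : ∀ s ≤ T, ∀ ω, |f s ω| ≤ B) (ht : t ≤ T) (ω : ℕ → Ω₁) :
    upValue T R f t ω ≤ snell T R f t ω :=
  ciInf_le_of_le (bddBelow_NE_stopped hR.probKernels hB t ω)
    ⟨_, isStopAt_optStop hR hf ht⟩ (NE_optStop hR hf ht ω).le

lemma lowValue_le_upValue (hR : ProbKernels T R) (hB : ∀ s ≤ T, ∀ ω, |f s ω| ≤ B) (ht : t ≤ T)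
    (ω : ℕ → Ω₁) : lowValue T R f t ω ≤ upValue T R f t ω := by
  have : Nonempty {τ : (ℕ → Ω₁) → ℕ // IsStopAt T t τ} := ⟨⟨_, isStopAt_const ht⟩⟩
  obtain ⟨σ₀, hσ₀, -⟩ := exists_isSelection (p := fun _ _ _ => True) fun t ht ω =>
    (hR t ht ω).1.imp fun _ hP => ⟨hP, trivial⟩
  have : Nonempty {σ // IsSelection T R σ} := ⟨⟨σ₀, hσ₀⟩⟩
  exact ciSup_le fun σ => le_ciInf fun τ => ciInf_le_of_le (bddBelow_PE_stopped hR hB σ.2 t ω) τ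
    (PE_le_NE hR σ.2 (fun ω' => hB _ (τ.2.1 ω').2 ω') t ω)

lemma snell_le_lowValue (hR : ProbKernels T R) (hf : AdaptedProc T f)
    (hB : ∀ s ≤ T, ∀ ω, |f s ω| ≤ B) (ht : t ≤ T) (ω : ℕ → Ω₁) :
    snell T R f t ω ≤ lowValue T R f t ω := by
  have : Nonempty {τ : (ℕ → Ω₁) → ℕ // IsStopAt T t τ} := ⟨⟨_, isStopAt_const ht⟩⟩
  have hbdd : BddAbove (range fun σ : {σ // IsSelection T R σ} =>
      ⨅ τ : {τ : (ℕ → Ω₁) → ℕ // IsStopAt T t τ}, PE T σ.1 t (fun ω' => f (τ.1 ω') ω') ω) := by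
    refine ⟨B, forall_mem_range.2 fun σ => ?_⟩
    exact ciInf_le_of_le (bddBelow_PE_stopped hR hB σ.2 t ω) ⟨_, isStopAt_const ht⟩
      (abs_le.1 (abs_PE_le hR σ.2 (hB T le_rfl) t ω)).2
  refine le_of_forall_pos_le_add fun ε hε => ?_
  set δ := ε / (T + 1) with hδ_def
  have hδ : 0 < δ := by positivity
  obtain ⟨σ, hσ, hopt⟩ := exists_isSelection fun t ht ω =>
    exists_sub_lt_stepExp (g := snell T R f (t + 1)) (hR t ht ω).1 hδ
  have hTδ : (T - t) * δ ≤ ε := by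
    calc (T - t) * δ ≤ (T + 1) * δ := by gcongr; linarith [(t.cast_nonneg : (0 : ℝ) ≤ t)]
      _ = ε := by rw [hδ_def]; field_simp
  have hinf : snell T R f t ω - (T - t) * δ ≤
      ⨅ τ : {τ : (ℕ → Ω₁) → ℕ // IsStopAt T t τ}, PE T σ t (fun ω' => f (τ.1 ω') ω') ω :=
    le_ciInf fun τ => snell_sub_le_PE hR hf hσ hδ.le (fun t ht ω => (hopt t ht ω).le) τ.2 ω
  have hsup : (⨅ τ : {τ : (ℕ → Ω₁) → ℕ // IsStopAt T t τ},
      PE T σ t (fun ω' => f (τ.1 ω') ω') ω) ≤ lowValue T R f t ω :=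
    le_ciSup hbdd ⟨σ, hσ⟩
  linarith

end Values

theorem stmt11_general {Ω₁ : Type*} [Fintype Ω₁] (T : ℕ)
    (R : ℕ → (ℕ → Ω₁) → Set (Ω₁ → ℝ)) (f : ℕ → (ℕ → Ω₁) → ℝ)
    (hR : GoodKernels T R) (hf : AdaptedProc T f) :
    ∀ ω : ℕ → Ω₁,
      (⨅ τ : {τ : (ℕ → Ω₁) → ℕ // IsStopAt T 0 τ},
        NE T R 0 (fun ω' => f (τ.1 ω') ω') ω) =
      (⨆ σ : {σ : ℕ → (ℕ → Ω₁) → (Ω₁ → ℝ) // ∀ t, t < T → ∀ ω', σ t ω' ∈ R t ω'},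
        ⨅ τ : {τ : (ℕ → Ω₁) → ℕ // IsStopAt T 0 τ},
          PE T σ.1 0 (fun ω' => f (τ.1 ω') ω') ω) := by
  intro ω
  have : Nonempty Ω₁ := ⟨ω 0⟩
  obtain ⟨B, hB⟩ := hf.exists_abs_le
  exact le_antisymm
    ((upValue_le_snell hR hf hB T.zero_le ω).trans
      (snell_le_lowValue hR.probKernels hf hB T.zero_le ω))
    (lowValue_le_upValue hR.probKernels hB T.zero_le ω)

/-- The adverse optimal stopping game has a value:
`inf_τ sup_{P ∈ 𝓡} E_P[f_τ] = sup_{P ∈ 𝓡} inf_τ E_P[f_τ]`, where `𝓡` is the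
pasting-stable family of measures generated by the one-step kernel sets `R`
(i.e. by all selections `σ` of `R`). -/
theorem stmt11 {Ω₁ : Type*} [Fintype Ω₁] [Nonempty Ω₁] (T : ℕ)
    (R : ℕ → (ℕ → Ω₁) → Set (Ω₁ → ℝ)) (f : ℕ → (ℕ → Ω₁) → ℝ)
    (hR : GoodKernels T R) (hf : AdaptedProc T f) :
    ∀ ω : ℕ → Ω₁,
      (⨅ τ : {τ : (ℕ → Ω₁) → ℕ // IsStopAt T 0 τ},
        NE T R 0 (fun ω' => f (τ.1 ω') ω') ω) =
      (⨆ σ : {σ : ℕ → (ℕ → Ω₁) → (Ω₁ → ℝ) // ∀ t, t < T → ∀ ω', σ t ω' ∈ R t ω'},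
        ⨅ τ : {τ : (ℕ → Ω₁) → ℕ // IsStopAt T 0 τ},
          PE T σ.1 0 (fun ω' => f (τ.1 ω') ω') ω) :=
  stmt11_general T R f hR hf
end

section
/- In a finite path-space model where $\mathcal{P}$ is all probability measures on $\Omega' \subset \Omega$ finite, the super-hedging price under stopping-time-independent strategies equals the super-hedging price of the lookback option: $\tilde\pi(\Phi) := \inf\{x : \exists (H,h), \ x + (H\cdot S)_T + h\cdot g \ge \Phi_\tau \text{ on } \Omega' \ \forall \tau \in \mathcal{T}\}$ satisfies $\tilde\pi(\Phi) = \inf\{x : \exists (H,h), \ x + (H\cdot S)_T + h\cdot g \ge \max_{t \le T} \Phi_t \text{ on } \Omega'\}$. -/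
/-- A dynamic trading strategy adapted on the path set `A`:
`H t` depends only on the path up to time `t`. -/
def AdaptedOn (A : Set (ℕ → ℝ)) (H : ℕ → (ℕ → ℝ) → ℝ) : Prop :=
  ∀ t : ℕ, ∀ s ∈ A, ∀ s' ∈ A, (∀ j, j ≤ t → s j = s' j) → H t s = H t s'

/-- A stopping time on the path set `A` with horizon `T`. -/
def IsStopOn (T : ℕ) (A : Set (ℕ → ℝ)) (τ : (ℕ → ℝ) → ℕ) : Prop :=
  (∀ s ∈ A, τ s ≤ T) ∧
  ∀ s ∈ A, ∀ s' ∈ A, (∀ j, j ≤ τ s → s j = s' j) → τ s' = τ s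

/-- The terminal gains `(H · S)_T` of dynamic trading along the path `s`. -/
noncomputable def gains (T : ℕ) (H : ℕ → (ℕ → ℝ) → ℝ) (s : ℕ → ℝ) : ℝ :=
  ∑ t ∈ Finset.range T, H t s * (s (t + 1) - s t)

theorem isStopOn_const {T u : ℕ} (hu : u ≤ T) (A : Set (ℕ → ℝ)) : IsStopOn T A fun _ => u :=
  ⟨fun _ _ => hu, fun _ _ _ _ _ => rfl⟩

theorem forall_isStopOn_le_iff_sup'_le {T : ℕ} {A : Set (ℕ → ℝ)} {Φ : ℕ → (ℕ → ℝ) → ℝ}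
    {V : (ℕ → ℝ) → ℝ} :
    (∀ τ, IsStopOn T A τ → ∀ s ∈ A, Φ (τ s) s ≤ V s) ↔
      ∀ s ∈ A, (Finset.range (T + 1)).sup' Finset.nonempty_range_add_one (fun u => Φ u s) ≤ V s := by
  constructor
  · intro hτ s hs
    obtain ⟨u, hu, hmax⟩ :=
      Finset.exists_mem_eq_sup' Finset.nonempty_range_add_one fun u => Φ u s
    rw [hmax]
    -- the deterministic time `u`, an arg max of `Φ · s` along this one path, is a stopping time
    exact hτ _ (isStopOn_const (Nat.lt_succ_iff.mp (Finset.mem_range.mp hu)) A) s hs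
  · intro hmax τ hτ s hs
    exact (Finset.le_sup' (fun u => Φ u s)
      (Finset.mem_range.mpr (Nat.lt_succ_of_le (hτ.1 s hs)))).trans (hmax s hs)

/-- When the strategy may not depend on the stopping time, super-hedging the
American option `Φ` is the same as super-hedging the lookback option
`max_{t ≤ T} Φ_t`:  the prices `π̃(Φ)` agree. -/
theorem stmt16 (T e : ℕ) (Ω' : Set (ℕ → ℝ))
    (Φ : ℕ → (ℕ → ℝ) → ℝ) (g : (ℕ → ℝ) → Fin e → ℝ) :
    sInf {x : ℝ | ∃ (H : ℕ → (ℕ → ℝ) → ℝ) (h : Fin e → ℝ), AdaptedOn Ω' H ∧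
        ∀ τ : (ℕ → ℝ) → ℕ, IsStopOn T Ω' τ →
          ∀ s ∈ Ω', Φ (τ s) s ≤ x + gains T H s + ∑ i, h i * g s i} =
    sInf {x : ℝ | ∃ (H : ℕ → (ℕ → ℝ) → ℝ) (h : Fin e → ℝ), AdaptedOn Ω' H ∧
        ∀ s ∈ Ω',
          (Finset.range (T + 1)).sup' (by simp) (fun u => Φ u s) ≤
            x + gains T H s + ∑ i, h i * g s i} := by
  congr 1
  ext x
  exact exists_congr fun _ => exists_congr fun _ =>
    and_congr_right fun _ => forall_isStopOn_le_iff_sup'_le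
end
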